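/- arXiv:2211.09133 — 2 statements merged into one kernel-verified Lean document; each statement's English description precedes it below -/
import Mathlib

section
/- Let A and B be bounded operators (e.g., square complex matrices) and t ≥ 0. Then the spectral-norm distance between the first-order Lie–Trotter formula and the exact evolution satisfies ‖e^{-itB} e^{-itA} − e^{-it(A+B)}‖ ≤ (t²/2)·‖[A,B]‖, where [A,B] = AB − BA. -/
/-!
Interpolate between the two evolutions by
`Φ(s) = e^{sY} e^{sX} e^{(t-s)(X+Y)}`, with `X = -iA`, `Y = -iB`, so that `Φ(0) = e^{t(X+Y)}` and
`Φ(t) = e^{tY} e^{tX}`. Differentiating, `Φ'(s) = e^{sY} [Y, e^{sX}] e^{(t-s)(X+Y)}`, and since the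
outer factors are unitary, `‖Φ'(s)‖ = ‖[Y, e^{sX}]‖`. The same trick applied to
`u ↦ e^{uX} Y e^{(s-u)X}`, whose derivative is `e^{uX} [X, Y] e^{(s-u)X}`, gives
`‖[Y, e^{sX}]‖ ≤ s ‖[X, Y]‖`. Integrating over `[0, t]` yields `‖Φ(t) - Φ(0)‖ ≤ (t²/2) ‖[X, Y]‖`.
-/

open NormedSpace Set

section CStarRing

variable {𝔸 : Type*} [NormedRing 𝔸] [StarRing 𝔸] [CStarRing 𝔸]

theorem norm_mem_unitary_mul_mul_mem_unitary {U V : 𝔸} (hU : U ∈ unitary 𝔸)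
    (hV : V ∈ unitary 𝔸) (M : 𝔸) : ‖U * M * V‖ = ‖M‖ := by
  rw [CStarRing.norm_mul_mem_unitary _ hV, CStarRing.norm_mem_unitary_mul _ hU]

end CStarRing

section BanachAlgebra

variable {𝔸 : Type*} [NormedRing 𝔸] [NormedAlgebra ℝ 𝔸] [CompleteSpace 𝔸]

theorem hasDerivAt_exp_sub_smul (X : 𝔸) (s u : ℝ) :
    HasDerivAt (fun u : ℝ => exp ((s - u) • X)) (-(X * exp ((s - u) • X))) u := by
  simpa [Function.comp_def] using
    (hasDerivAt_exp_smul_const' X (s - u)).scomp u ((hasDerivAt_id u).const_sub s)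

theorem hasDerivAt_exp_smul_mul_mul_exp_sub_smul (X Y : 𝔸) (s u : ℝ) :
    HasDerivAt (fun u : ℝ => exp (u • X) * Y * exp ((s - u) • X))
      (exp (u • X) * (X * Y - Y * X) * exp ((s - u) • X)) u := by
  refine (((hasDerivAt_exp_smul_const X u).mul_const Y).mul
    (hasDerivAt_exp_sub_smul X s u)).congr_deriv ?_
  simp only [mul_sub, sub_mul, mul_neg, mul_assoc]
  abel

theorem hasDerivAt_exp_smul_mul_exp_smul_mul_exp_sub_smul (X Y : 𝔸) (t s : ℝ) :
    HasDerivAt (fun u : ℝ => exp (u • Y) * exp (u • X) * exp ((t - u) • (X + Y)))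
      (exp (s • Y) * (Y * exp (s • X) - exp (s • X) * Y) * exp ((t - s) • (X + Y))) s := by
  refine (((hasDerivAt_exp_smul_const Y s).mul (hasDerivAt_exp_smul_const X s)).mul
    (hasDerivAt_exp_sub_smul (X + Y) t s)).congr_deriv ?_
  simp only [Pi.mul_apply, mul_sub, sub_mul, mul_add, add_mul, mul_neg, mul_assoc]
  abel

variable [StarRing 𝔸] [CStarRing 𝔸]

theorem norm_exp_smul_mul_sub_mul_exp_smul_le {X : 𝔸}
    (hX : ∀ u : ℝ, exp (u • X) ∈ unitary 𝔸) (Y : 𝔸) {s : ℝ} (hs : 0 ≤ s) :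
    ‖exp (s • X) * Y - Y * exp (s • X)‖ ≤ s * ‖X * Y - Y * X‖ := by
  have key := norm_image_sub_le_of_norm_deriv_le_segment'
    (fun u _ => (hasDerivAt_exp_smul_mul_mul_exp_sub_smul X Y s u).hasDerivWithinAt)
    (fun u _ => (norm_mem_unitary_mul_mul_mem_unitary (hX u) (hX (s - u)) _).le) s
    (right_mem_Icc.2 hs)
  simpa [mul_comm] using key

theorem norm_exp_smul_mul_exp_smul_sub_exp_smul_add_le {X Y : 𝔸}
    (hX : ∀ u : ℝ, exp (u • X) ∈ unitary 𝔸) (hY : ∀ u : ℝ, exp (u • Y) ∈ unitary 𝔸)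
    (hXY : ∀ u : ℝ, exp (u • (X + Y)) ∈ unitary 𝔸) {t : ℝ} (ht : 0 ≤ t) :
    ‖exp (t • Y) * exp (t • X) - exp (t • (X + Y))‖ ≤ t ^ 2 / 2 * ‖X * Y - Y * X‖ := by
  set c := ‖X * Y - Y * X‖
  set Φ : ℝ → 𝔸 := fun s => exp (s • Y) * exp (s • X) * exp ((t - s) • (X + Y))
  have hΦ (s : ℝ) :=
    (hasDerivAt_exp_smul_mul_exp_smul_mul_exp_sub_smul X Y t s).sub_const (Φ 0)
  have hΦ'_le (s : ℝ) (hs : s ∈ Ico 0 t) :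
      ‖exp (s • Y) * (Y * exp (s • X) - exp (s • X) * Y) * exp ((t - s) • (X + Y))‖ ≤ c * s := by
    rw [norm_mem_unitary_mul_mul_mem_unitary (hY s) (hXY (t - s)), norm_sub_rev, mul_comm]
    exact norm_exp_smul_mul_sub_mul_exp_smul_le hX Y hs.1
  have hquadratic (s : ℝ) : HasDerivAt (fun s : ℝ => c * (s ^ 2 / 2)) (c * s) s := by
    simpa using ((hasDerivAt_pow 2 s).div_const 2).const_mul c
  have key := image_norm_le_of_norm_deriv_right_le_deriv_boundary (f := fun s => Φ s - Φ 0)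
    (fun s _ => (hΦ s).continuousAt.continuousWithinAt) (fun s _ => (hΦ s).hasDerivWithinAt)
    (by simp) hquadratic hΦ'_le (right_mem_Icc.2 ht)
  simpa [Φ, mul_comm] using key

end BanachAlgebra

section CStarAlgebra

variable {𝔸 : Type*} [CStarAlgebra 𝔸]

theorem exp_real_smul_neg_I_smul_mem_unitary {A : 𝔸} (hA : IsSelfAdjoint A) (u : ℝ) :
    exp (u • (-Complex.I) • A) ∈ unitary 𝔸 := by
  let : NormedAlgebra ℚ 𝔸 := .restrictScalars ℚ ℂ 𝔸
  refine exp_mem_unitary_of_mem_skewAdjoint (skewAdjoint.smul_mem u ?_)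
  exact hA.smul_mem_skewAdjoint (by simp [skewAdjoint.mem_iff])

theorem real_smul_neg_I_smul (u : ℝ) (A : 𝔸) :
    u • (-Complex.I) • A = (-(Complex.I * u)) • A := by
  rw [← smul_assoc]
  congr 1
  simp [mul_comm]

theorem norm_neg_I_smul_commutator (A B : 𝔸) :
    ‖(-Complex.I) • A * (-Complex.I) • B - (-Complex.I) • B * (-Complex.I) • A‖ =
      ‖A * B - B * A‖ := by
  rw [smul_mul_smul_comm, smul_mul_smul_comm, ← smul_sub, norm_smul]
  simp

theorem norm_exp_neg_I_smul_mul_exp_neg_I_smul_sub_exp_neg_I_smul_add_le {A B : 𝔸}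
    (hA : IsSelfAdjoint A) (hB : IsSelfAdjoint B) {t : ℝ} (ht : 0 ≤ t) :
    ‖exp ((-(Complex.I * t)) • B) * exp ((-(Complex.I * t)) • A)
        - exp ((-(Complex.I * t)) • (A + B))‖ ≤ t ^ 2 / 2 * ‖A * B - B * A‖ := by
  have hAB := exp_real_smul_neg_I_smul_mem_unitary (hA.add hB)
  simp only [smul_add (-Complex.I) A B] at hAB
  have key := norm_exp_smul_mul_exp_smul_sub_exp_smul_add_le
    (exp_real_smul_neg_I_smul_mem_unitary hA) (exp_real_smul_neg_I_smul_mem_unitary hB) hAB ht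
  simpa only [← smul_add, real_smul_neg_I_smul, norm_neg_I_smul_commutator] using key

end CStarAlgebra

/-- First-order Lie–Trotter error bound: for self-adjoint operators `A`, `B` on a
finite-dimensional complex Hilbert space and `t ≥ 0`,
`‖e^{-itB} e^{-itA} − e^{-it(A+B)}‖ ≤ (t²/2)·‖[A,B]‖`. -/
theorem trotter_first_order_error {n : ℕ}
    (A B : EuclideanSpace ℂ (Fin n) →L[ℂ] EuclideanSpace ℂ (Fin n))
    (hA : IsSelfAdjoint A) (hB : IsSelfAdjoint B) (t : ℝ) (ht : 0 ≤ t) :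
    ‖exp ((-(Complex.I * t)) • B) * exp ((-(Complex.I * t)) • A)
        - exp ((-(Complex.I * t)) • (A + B))‖
      ≤ t ^ 2 / 2 * ‖A * B - B * A‖ :=
  norm_exp_neg_I_smul_mul_exp_neg_I_smul_sub_exp_neg_I_smul_add_le hA hB ht
end

section
/- (Discrete counting lower bound) Fix integers m, μ ≥ 1 and accuracy δ with 1/2^m ≤ δ and 2^m·arcsin(2δ√(1−δ²)) ≥ 1. The family of discrete diagonal unitaries U_β = Σ_x e^{2πi β_x / 2^m} |x⟩⟨x|, where x ranges over 2^μ basis states and each β_x ∈ {0,1,…,2^m−1}, has exactly 2^{m·2^μ} elements. If every such U_β lies within spectral-norm distance δ of one of N fixed unitaries, then N ≥ 2^{m·2^μ} / (c·2^m·δ)^{2^μ} for some universal constant c, so N · (c·2^m·δ)^{2^μ} ≥ 2^{m·2^μ}. -/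
open Real

/-- The discrete diagonal unitary `U_β = Σ_x e^{2πi β_x / 2^m} |x⟩⟨x|` on `μ` qubits,
with `m`-bit phases `β_x ∈ {0,…,2^m−1}`, as an operator on Euclidean space (so the
operator norm is the spectral norm). -/
noncomputable def discreteDiagUnitary (μ m : ℕ) (β : Fin (2 ^ μ) → Fin (2 ^ m)) :
    EuclideanSpace ℂ (Fin (2 ^ μ)) →L[ℂ] EuclideanSpace ℂ (Fin (2 ^ μ)) :=
  Matrix.toEuclideanCLM (𝕜 := ℂ)
    (Matrix.diagonal fun x =>
      Complex.exp (2 * Real.pi * Complex.I * (β x : ℕ) / (2 ^ m : ℕ)))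

namespace DiagCountAux

lemma diag_apply_single {n : Type*} [Fintype n] [DecidableEq n] (d : n → ℂ) (x : n) :
    Matrix.toEuclideanCLM (𝕜 := ℂ) (Matrix.diagonal d) (EuclideanSpace.single x 1)
      = d x • EuclideanSpace.single x 1 := by
  rw [← EuclideanSpace.toLp_single, Matrix.toEuclideanCLM_toLp,
    Matrix.diagonal_mulVec_single]
  ext j
  simp [EuclideanSpace.single_apply, Pi.single_apply]

set_option synthInstance.maxHeartbeats 1000000 in
set_option maxHeartbeats 1000000 in
lemma abs_sub_le_opNorm_diag {n : Type*} [Fintype n] [DecidableEq n] (d d' : n → ℂ) (x : n) :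
    ‖d x - d' x‖ ≤
      ‖Matrix.toEuclideanCLM (𝕜 := ℂ) (Matrix.diagonal d) -
        Matrix.toEuclideanCLM (𝕜 := ℂ) (Matrix.diagonal d')‖ := by
  have h := ContinuousLinearMap.le_opNorm
    (Matrix.toEuclideanCLM (𝕜 := ℂ) (Matrix.diagonal d) -
      Matrix.toEuclideanCLM (𝕜 := ℂ) (Matrix.diagonal d'))
    (EuclideanSpace.single x (1 : ℂ))
  rw [ContinuousLinearMap.sub_apply, diag_apply_single, diag_apply_single,
    ← sub_smul, norm_smul, EuclideanSpace.norm_single] at h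
  simpa using h

lemma arg_eq (M n : ℕ) :
    (2 * (Real.pi : ℂ) * Complex.I * n / M) = ((2 * Real.pi * n / M : ℝ) : ℂ) * Complex.I := by
  push_cast
  ring

lemma abs_exp_theta_sub_one (θ : ℝ) :
    ‖Complex.exp (θ * Complex.I) - 1‖ = 2 * |Real.sin (θ / 2)| := by
  rw [Complex.exp_mul_I]
  have hre : (Complex.cos θ + Complex.sin θ * Complex.I - 1).re = Real.cos θ - 1 := by
    simp [Complex.cos_ofReal_re, Complex.sin_ofReal_im]
  have him : (Complex.cos θ + Complex.sin θ * Complex.I - 1).im = Real.sin θ := by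
    simp [Complex.cos_ofReal_im, Complex.sin_ofReal_re]
  rw [Complex.norm_def, Complex.normSq_apply, hre, him]
  have hθ : Real.cos θ = 1 - 2 * Real.sin (θ / 2) ^ 2 := by
    have h := Real.cos_two_mul' (θ / 2)
    rw [show 2 * (θ / 2) = θ by ring] at h
    nlinarith [Real.sin_sq_add_cos_sq (θ / 2)]
  have key : (Real.cos θ - 1) * (Real.cos θ - 1) + Real.sin θ * Real.sin θ
      = (2 * |Real.sin (θ / 2)|) ^ 2 := by
    have hs := Real.sin_sq_add_cos_sq θ
    have habs : |Real.sin (θ / 2)| ^ 2 = Real.sin (θ / 2) ^ 2 := sq_abs _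
    nlinarith
  rw [key, Real.sqrt_sq (by positivity)]

lemma exp_phase_mod (M : ℕ) (hM : 0 < M) (n : ℕ) :
    Complex.exp (2 * Real.pi * Complex.I * n / M)
      = Complex.exp (2 * Real.pi * Complex.I * (n % M : ℕ) / M) := by
  conv_lhs => rw [← Nat.mod_add_div n M]
  have hMne : (M : ℂ) ≠ 0 := Nat.cast_ne_zero.mpr hM.ne'
  have : (2 * (Real.pi : ℂ) * Complex.I * ((n % M : ℕ) + M * (n / M : ℕ)) / M)
      = 2 * Real.pi * Complex.I * (n % M : ℕ) / M + (n / M : ℕ) * (2 * Real.pi * Complex.I) := by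
    field_simp
  rw [show ((n % M + M * (n / M) : ℕ) : ℂ) = ((n % M : ℕ) : ℂ) + (M : ℂ) * ((n / M : ℕ) : ℂ) by
      push_cast; ring, this, Complex.exp_add]
  rw [show ((n / M : ℕ) : ℂ) * (2 * (Real.pi : ℂ) * Complex.I)
      = (((n / M : ℕ) : ℤ) : ℂ) * (2 * Real.pi * Complex.I) by norm_cast]
  rw [Complex.exp_int_mul_two_pi_mul_I]
  ring

lemma abs_exp_phase_sub (M : ℕ) [NeZero M] (k b : Fin M) :
    ‖Complex.exp (2 * Real.pi * Complex.I * (k : ℕ) / M)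
        - Complex.exp (2 * Real.pi * Complex.I * (b : ℕ) / M)‖
      = 2 * |Real.sin (Real.pi * ((k - b : Fin M) : ℕ) / M)| := by
  have hM : 0 < M := Nat.pos_of_ne_zero (NeZero.ne M)
  set j : Fin M := k - b with hj
  have hk : j + b = k := by rw [hj]; exact sub_add_cancel k b
  have hval : (k : ℕ) = ((j : ℕ) + (b : ℕ)) % M := by
    rw [← hk, Fin.add_def]
  have hexpk : Complex.exp (2 * Real.pi * Complex.I * (k : ℕ) / M)
      = Complex.exp (2 * Real.pi * Complex.I * (j : ℕ) / M)
        * Complex.exp (2 * Real.pi * Complex.I * (b : ℕ) / M) := by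
    rw [hval, ← exp_phase_mod M hM, ← Complex.exp_add]
    congr 1
    have hMne : (M : ℂ) ≠ 0 := Nat.cast_ne_zero.mpr hM.ne'
    push_cast
    field_simp
  rw [hexpk, show Complex.exp (2 * Real.pi * Complex.I * (j : ℕ) / M)
        * Complex.exp (2 * Real.pi * Complex.I * (b : ℕ) / M)
      - Complex.exp (2 * Real.pi * Complex.I * (b : ℕ) / M)
      = (Complex.exp (2 * Real.pi * Complex.I * (j : ℕ) / M) - 1)
        * Complex.exp (2 * Real.pi * Complex.I * (b : ℕ) / M) by ring,
    norm_mul, arg_eq M (b : ℕ), Complex.norm_exp_ofReal_mul_I, mul_one, arg_eq M (j : ℕ),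
    abs_exp_theta_sub_one]
  rw [show 2 * Real.pi * ((j : ℕ) : ℝ) / (M : ℝ) / 2 = Real.pi * ((j : ℕ) : ℝ) / M by ring]

lemma card_sin_small (M : ℕ) (hM : 0 < M) (δ : ℝ) (hδ0 : 0 ≤ δ) (hδ1 : 1 ≤ (M : ℝ) * δ) :
    (((Finset.univ.filter fun j : Fin M => |Real.sin (Real.pi * (j : ℕ) / M)| ≤ δ).card : ℝ))
      ≤ 3 * M * δ := by
  set D : ℕ := ⌊(M : ℝ) * δ / 2⌋₊ with hD
  have hMpos : (0 : ℝ) < M := by exact_mod_cast hM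
  -- key step estimate
  have hstep : ∀ t : ℕ, 2 * t ≤ M → |Real.sin (Real.pi * t / M)| ≤ δ → t ≤ D := by
    intro t ht hsin
    have hx0 : (0 : ℝ) ≤ Real.pi * t / M := by positivity
    have hx2 : Real.pi * t / M ≤ Real.pi / 2 := by
      rw [div_le_div_iff₀ hMpos (by norm_num : (0:ℝ) < 2)]
      have : (2 : ℝ) * t ≤ M := by exact_mod_cast ht
      nlinarith [Real.pi_pos]
    have hsin2 := Real.mul_le_sin hx0 hx2
    have h2t : 2 * (t : ℝ) / M ≤ δ := by
      have hge : 2 / Real.pi * (Real.pi * t / M) = 2 * (t : ℝ) / M := by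
        field_simp
      calc 2 * (t : ℝ) / M = 2 / Real.pi * (Real.pi * t / M) := hge.symm
        _ ≤ Real.sin (Real.pi * t / M) := hsin2
        _ ≤ |Real.sin (Real.pi * t / M)| := le_abs_self _
        _ ≤ δ := hsin
    apply Nat.le_floor
    rw [div_le_iff₀ hMpos] at h2t
    linarith
  have hdichot : ∀ j : Fin M, |Real.sin (Real.pi * (j : ℕ) / M)| ≤ δ →
      (j : ℕ) ≤ D ∨ M - (j : ℕ) ≤ D := by
    intro j hj
    by_cases hc : 2 * (j : ℕ) ≤ M
    · exact Or.inl (hstep _ hc hj)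
    · right
      apply hstep
      · omega
      · have hcast : ((M - (j : ℕ) : ℕ) : ℝ) = (M : ℝ) - (j : ℕ) := by
          have : (j : ℕ) ≤ M := (j.isLt).le
          exact Nat.cast_sub this
        have : Real.pi * ((M - (j : ℕ) : ℕ) : ℝ) / M = Real.pi - Real.pi * (j : ℕ) / M := by
          rw [hcast]
          field_simp
        rw [this, Real.sin_pi_sub]
        exact hj
  -- split into two pieces and count
  set T := Finset.univ.filter fun j : Fin M => |Real.sin (Real.pi * (j : ℕ) / M)| ≤ δ with hT
  set A := Finset.univ.filter fun j : Fin M => (j : ℕ) ≤ D with hA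
  set B := Finset.univ.filter fun j : Fin M => M - (j : ℕ) ≤ D with hB
  have hsub : T ⊆ A ∪ B := by
    intro j hjT
    rw [hT, Finset.mem_filter] at hjT
    rcases hdichot j hjT.2 with h | h
    · exact Finset.mem_union_left _ (by rw [hA, Finset.mem_filter]; exact ⟨Finset.mem_univ _, h⟩)
    · exact Finset.mem_union_right _ (by rw [hB, Finset.mem_filter]; exact ⟨Finset.mem_univ _, h⟩)
  have hcardA : A.card ≤ D + 1 := by
    have := Finset.card_le_card_of_injOn (s := A) (t := Finset.range (D + 1))
      (fun j : Fin M => (j : ℕ))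
      (fun j hj => by
        rw [Finset.mem_coe, hA, Finset.mem_filter] at hj
        exact Finset.mem_range.mpr (Nat.lt_succ_of_le hj.2))
      (fun a _ b _ hab => Fin.val_injective hab)
    simpa [Finset.card_range] using this
  have hcardB : B.card ≤ D + 1 := by
    have := Finset.card_le_card_of_injOn (s := B) (t := Finset.range (D + 1))
      (fun j : Fin M => M - 1 - (j : ℕ))
      (fun j hj => by
        rw [Finset.mem_coe, hB, Finset.mem_filter] at hj
        have hlt : (j : ℕ) < M := j.isLt
        have : M - 1 - (j : ℕ) ≤ D := by omega
        exact Finset.mem_range.mpr (Nat.lt_succ_of_le this))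
      (fun a ha b hb hab => by
        have ha' : (a : ℕ) < M := a.isLt
        have hb' : (b : ℕ) < M := b.isLt
        apply Fin.val_injective
        simp only at hab
        omega)
    simpa [Finset.card_range] using this
  have hcardT : T.card ≤ 2 * D + 2 := by
    calc T.card ≤ (A ∪ B).card := Finset.card_le_card hsub
      _ ≤ A.card + B.card := Finset.card_union_le _ _
      _ ≤ (D + 1) + (D + 1) := Nat.add_le_add hcardA hcardB
      _ = 2 * D + 2 := by ring
  have hDle : (D : ℝ) ≤ (M : ℝ) * δ / 2 := Nat.floor_le (by positivity)
  have : (T.card : ℝ) ≤ 2 * D + 2 := by exact_mod_cast hcardT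
  calc (T.card : ℝ) ≤ 2 * D + 2 := this
    _ ≤ 2 * ((M : ℝ) * δ / 2) + 2 * ((M : ℝ) * δ) := by nlinarith
    _ = 3 * M * δ := by ring

end DiagCountAux

/-- Discrete counting lower bound: there is a universal constant `c > 0` such that for
all `m, μ ≥ 1` and accuracy `δ` with `1/2^m ≤ δ` and `2^m·arcsin(2δ√(1−δ²)) ≥ 1`,
the family of discrete diagonal unitaries has exactly `2^{m·2^μ}` members, and if each
of them is within spectral-norm distance `δ` of one of `N` fixed operators, then
`N · (c·2^m·δ)^{2^μ} ≥ 2^{m·2^μ}`. -/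
theorem discrete_diag_unitary_counting_bound :
    ∃ c : ℝ, 0 < c ∧
      ∀ m μ N : ℕ, 1 ≤ m → 1 ≤ μ → ∀ δ : ℝ,
        (1 : ℝ) / 2 ^ m ≤ δ → δ < 1 →
        (1 : ℝ) ≤ 2 ^ m * Real.arcsin (2 * δ * Real.sqrt (1 - δ ^ 2)) →
        Fintype.card (Fin (2 ^ μ) → Fin (2 ^ m)) = 2 ^ (m * 2 ^ μ) ∧
        ∀ V : Fin N → (EuclideanSpace ℂ (Fin (2 ^ μ)) →L[ℂ] EuclideanSpace ℂ (Fin (2 ^ μ))),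
          (∀ β : Fin (2 ^ μ) → Fin (2 ^ m),
            ∃ i, ‖discreteDiagUnitary μ m β - V i‖ ≤ δ) →
          (2 : ℝ) ^ (m * 2 ^ μ) ≤ (N : ℝ) * (c * 2 ^ m * δ) ^ (2 ^ μ) := by
  classical
  refine ⟨3, by norm_num, ?_⟩
  intro m μ N hm hμ δ hδlow hδ1 _harcsin
  have hMpos : 0 < 2 ^ m := pow_pos two_pos m
  haveI : NeZero (2 ^ m) := ⟨hMpos.ne'⟩
  have hMcast : (((2 : ℕ) ^ m : ℕ) : ℝ) = (2 : ℝ) ^ m := by push_cast; ring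
  have h2mpos : (0 : ℝ) < 2 ^ m := by positivity
  have hδ0 : 0 < δ := lt_of_lt_of_le (by positivity) hδlow
  have hδM : 1 ≤ (((2 : ℕ) ^ m : ℕ) : ℝ) * δ := by
    rw [hMcast]
    rw [div_le_iff₀ h2mpos] at hδlow
    linarith
  have hcard : Fintype.card (Fin (2 ^ μ) → Fin (2 ^ m)) = 2 ^ (m * 2 ^ μ) := by
    rw [Fintype.card_fun, Fintype.card_fin, Fintype.card_fin, ← pow_mul]
  refine ⟨hcard, ?_⟩
  intro V hV
  set f : (Fin (2 ^ μ) → Fin (2 ^ m)) → Fin N := fun β => (hV β).choose with hf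
  have hfspec : ∀ β, ‖discreteDiagUnitary μ m β - V (f β)‖ ≤ δ := fun β => (hV β).choose_spec
  have fiber_bound : ∀ i : Fin N,
      ((Finset.univ.filter fun β => f β = i).card : ℝ) ≤ (3 * 2 ^ m * δ) ^ (2 ^ μ) := by
    intro i
    by_cases hFe : (Finset.univ.filter fun β => f β = i).Nonempty
    · obtain ⟨β₀, hβ₀⟩ := hFe
      rw [Finset.mem_filter] at hβ₀
      set S : Fin (2 ^ μ) → Finset (Fin (2 ^ m)) := fun x =>
        Finset.univ.filter fun k => ‖
          (Complex.exp (2 * Real.pi * Complex.I * (k : ℕ) / ((2 : ℕ) ^ m : ℕ))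
            - Complex.exp (2 * Real.pi * Complex.I * (β₀ x : ℕ) / ((2 : ℕ) ^ m : ℕ)))‖
          ≤ 2 * δ with hS
      have hSsub : (Finset.univ.filter fun β => f β = i) ⊆ Fintype.piFinset S := by
        intro β hβ
        rw [Finset.mem_filter] at hβ
        rw [Fintype.mem_piFinset]
        intro x
        have hnorm : ‖discreteDiagUnitary μ m β - discreteDiagUnitary μ m β₀‖ ≤ 2 * δ := by
          have h1 := hfspec β
          have h2 := hfspec β₀
          rw [hβ.2] at h1
          rw [hβ₀.2] at h2
          calc ‖discreteDiagUnitary μ m β - discreteDiagUnitary μ m β₀‖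
              = ‖(discreteDiagUnitary μ m β - V i) - (discreteDiagUnitary μ m β₀ - V i)‖ := by
                congr 1; abel
            _ ≤ ‖discreteDiagUnitary μ m β - V i‖ + ‖discreteDiagUnitary μ m β₀ - V i‖ :=
                norm_sub_le _ _
            _ ≤ δ + δ := add_le_add h1 h2
            _ = 2 * δ := by ring
        have habs := DiagCountAux.abs_sub_le_opNorm_diag
          (fun y => Complex.exp (2 * Real.pi * Complex.I * (β y : ℕ) / ((2 : ℕ) ^ m : ℕ)))
          (fun y => Complex.exp (2 * Real.pi * Complex.I * (β₀ y : ℕ) / ((2 : ℕ) ^ m : ℕ))) x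
        rw [hS]
        rw [Finset.mem_filter]
        refine ⟨Finset.mem_univ _, ?_⟩
        exact le_trans habs hnorm
      have hcard1 : (Finset.univ.filter fun β => f β = i).card ≤ ∏ x, (S x).card := by
        have := Finset.card_le_card hSsub
        rwa [Fintype.card_piFinset] at this
      have hSx : ∀ x, ((S x).card : ℝ) ≤ 3 * 2 ^ m * δ := by
        intro x
        have hinj : (S x).card ≤ (Finset.univ.filter fun j : Fin (2 ^ m) =>
            |Real.sin (Real.pi * (j : ℕ) / (((2 : ℕ) ^ m : ℕ) : ℝ))| ≤ δ).card := by
          apply Finset.card_le_card_of_injOn (fun k => k - β₀ x)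
          · intro k hk
            rw [Finset.mem_coe, hS, Finset.mem_filter] at hk
            rw [Finset.mem_coe, Finset.mem_filter]
            refine ⟨Finset.mem_univ _, ?_⟩
            have hkey := DiagCountAux.abs_exp_phase_sub (2 ^ m) k (β₀ x)
            rw [hkey] at hk
            linarith [hk.2]
          · intro a _ b _ hab
            exact sub_left_inj.mp hab
        have hsmall := DiagCountAux.card_sin_small (2 ^ m) hMpos δ hδ0.le hδM
        have : ((S x).card : ℝ) ≤ ((Finset.univ.filter fun j : Fin (2 ^ m) =>
            |Real.sin (Real.pi * (j : ℕ) / (((2 : ℕ) ^ m : ℕ) : ℝ))| ≤ δ).card : ℝ) := by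
          exact_mod_cast hinj
        calc ((S x).card : ℝ) ≤ _ := this
          _ ≤ 3 * (((2 : ℕ) ^ m : ℕ) : ℝ) * δ := hsmall
          _ = 3 * 2 ^ m * δ := by rw [hMcast]
      have s1 : ((Finset.univ.filter fun β => f β = i).card : ℝ)
          ≤ ((∏ x, (S x).card : ℕ) : ℝ) := by exact_mod_cast hcard1
      have s2 : ((∏ x, (S x).card : ℕ) : ℝ) = ∏ x, ((S x).card : ℝ) := by
        push_cast; ring
      have s3 : ∏ x, ((S x).card : ℝ) ≤ ∏ _x : Fin (2 ^ μ), (3 * 2 ^ m * δ) :=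
        Finset.prod_le_prod (fun x _ => Nat.cast_nonneg _) (fun x _ => hSx x)
      have s4 : ∏ _x : Fin (2 ^ μ), (3 * 2 ^ m * δ) = (3 * 2 ^ m * δ) ^ (2 ^ μ) := by
        rw [Finset.prod_const, Finset.card_univ, Fintype.card_fin]
      rw [← s4]
      exact le_trans s1 (le_of_eq s2 |>.trans s3)
    · rw [Finset.not_nonempty_iff_eq_empty] at hFe
      rw [hFe]
      simp only [Finset.card_empty, Nat.cast_zero]
      positivity
  have htotal : (Finset.univ : Finset (Fin (2 ^ μ) → Fin (2 ^ m))).card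
      = ∑ i : Fin N, (Finset.univ.filter fun β => f β = i).card :=
    Finset.card_eq_sum_card_fiberwise (fun β _ => Finset.mem_univ (f β))
  have hcardU : ((Finset.univ : Finset (Fin (2 ^ μ) → Fin (2 ^ m))).card : ℝ)
      = 2 ^ (m * 2 ^ μ) := by
    rw [Finset.card_univ, hcard]
    push_cast
    ring
  have e2 : ((Finset.univ : Finset (Fin (2 ^ μ) → Fin (2 ^ m))).card : ℝ)
      = ∑ i : Fin N, ((Finset.univ.filter fun β => f β = i).card : ℝ) := by
    rw [htotal]; push_cast; ring
  have e3 : ∑ i : Fin N, ((Finset.univ.filter fun β => f β = i).card : ℝ)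
      ≤ ∑ _i : Fin N, (3 * 2 ^ m * δ) ^ (2 ^ μ) :=
    Finset.sum_le_sum (fun i _ => fiber_bound i)
  have e4 : ∑ _i : Fin N, (3 * 2 ^ m * δ) ^ (2 ^ μ)
      = (N : ℝ) * (3 * 2 ^ m * δ) ^ (2 ^ μ) := by
    rw [Finset.sum_const, Finset.card_univ, Fintype.card_fin, nsmul_eq_mul]
  rw [← hcardU, e2, ← e4]
  exact e3
end
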